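/- For any fixed h ∈ Z^n, the sum over all connected spanning subgraphs G of G_h of (-1)^{e(G)} equals (-1)^n times the number of h-increasing trees on {0,...,n}. -/

import Mathlib

open scoped Classical
open MeasureTheory

noncomputable section

def extv {α : Type*} [Zero α] {n : ℕ} (x : Fin n → α) : Fin (n + 1) → α :=
  Fin.cases 0 x

/-- The centroid `h̄` of `h ∈ ℤ^n`: `h̄_i = h_i + i/(n+1)`, with the convention `h_0 = 0`. -/
def cent (n : ℕ) (h : Fin n → ℤ) : Fin (n + 1) → ℝ :=
  fun i => (extv h i : ℤ) + (i : ℝ) / (n + 1)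

/-- The graph `G_h` on `{0, …, n}` whose edges are the pairs `(i,j)` with `|h̄_i - h̄_j| < 1`. -/
def Gh (n : ℕ) (h : Fin n → ℤ) : SimpleGraph (Fin (n + 1)) where
  Adj i j := i ≠ j ∧ |cent n h i - cent n h j| < 1
  symm := ⟨fun i j hij => ⟨hij.1.symm, by rw [abs_sub_comm]; exact hij.2⟩⟩
  loopless := ⟨fun i hi => hi.1 rfl⟩

/-- The key of the pair `(i, j)`: the pair `(min(h̄_i, h̄_j), max(h̄_i, h̄_j))` with the
lexicographic order, along which edges of `G_h` are ordered. -/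
def keyC (n : ℕ) (h : Fin n → ℤ) (p : Fin (n + 1) × Fin (n + 1)) : ℝ ×ₗ ℝ :=
  toLex (min (cent n h p.1) (cent n h p.2), max (cent n h p.1) (cent n h p.2))

/-- The subgraph of `G` consisting of the edges strictly greater than `e`. -/
def aboveC (n : ℕ) (h : Fin n → ℤ) (G : SimpleGraph (Fin (n + 1)))
    (e : Fin (n + 1) × Fin (n + 1)) : SimpleGraph (Fin (n + 1)) where
  Adj a b := G.Adj a b ∧ keyC n h e < keyC n h (a, b)
  symm := by
    constructor
    intro a b hab
    refine ⟨hab.1.symm, ?_⟩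
    have hk : keyC n h (a, b) = keyC n h (b, a) := by
      simp only [keyC]; rw [min_comm (cent n h a), max_comm (cent n h a)]
    rw [← hk]; exact hab.2
  loopless := ⟨fun a ha => G.loopless.irrefl a ha.1⟩

/-- An edge `e = (i, j)` of `G_h` (normalized so that `h̄_i < h̄_j`) is `(G, h)`-active if
`i` and `j` are joined by a path among the edges of `G` strictly greater than `e`. -/
def IsActiveC (n : ℕ) (h : Fin n → ℤ) (G : SimpleGraph (Fin (n + 1)))
    (e : Fin (n + 1) × Fin (n + 1)) : Prop :=
  cent n h e.1 < cent n h e.2 ∧ (Gh n h).Adj e.1 e.2 ∧ (aboveC n h G e).Reachable e.1 e.2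

/-- The finset of `(G, h)`-active edges. -/
def activeC (n : ℕ) (h : Fin n → ℤ) (G : SimpleGraph (Fin (n + 1))) :
    Finset (Fin (n + 1) × Fin (n + 1)) :=
  Finset.univ.filter (IsActiveC n h G)

/-- `G ⊕ e`: toggle the edge `e` (delete it if present, add it otherwise). -/
def toggleC {n : ℕ} (G : SimpleGraph (Fin (n + 1))) (e : Fin (n + 1) × Fin (n + 1)) :
    SimpleGraph (Fin (n + 1)) :=
  if G.Adj e.1 e.2 then G.deleteEdges {s(e.1, e.2)}
  else G ⊔ SimpleGraph.fromEdgeSet {s(e.1, e.2)}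

/-- The map `Ψ_h`: toggle the least `(G, h)`-active edge, if any. -/
def PsiH (n : ℕ) (h : Fin n → ℤ) (G : SimpleGraph (Fin (n + 1))) :
    SimpleGraph (Fin (n + 1)) :=
  if hne : (activeC n h G).Nonempty then
    toggleC G (Finset.exists_min_image (activeC n h G) (keyC n h) hne).choose
  else G

/-- The index `i_0` of the least coordinate of the centroid `h̄`. -/
def idxMin (n : ℕ) (h : Fin n → ℤ) : Fin (n + 1) :=
  (Finite.exists_min (cent n h)).choose

/-- An `h`-increasing tree on `{0, …, n}`: a spanning tree of `G_h` such that `h̄` strictly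
increases along every simple path starting at the vertex `i_0` minimizing `h̄`. -/
def IsIncTree (n : ℕ) (h : Fin n → ℤ) (T : SimpleGraph (Fin (n + 1))) : Prop :=
  T.IsTree ∧ T ≤ Gh n h ∧
    ∀ (v : Fin (n + 1)) (p : T.Walk (idxMin n h) v), p.IsPath →
      List.Chain' (fun a b => cent n h a < cent n h b) p.support

end


/-!
Toggling the least active edge `e` of a connected subgraph `G ≤ G_h` is a sign-reversing
involution on the subgraphs that have an active edge: the endpoints of `e` stay joined by edges
larger than `e`, so connectivity survives, and edges above `e` are untouched while no edge below
`e` can become active, so the active set, hence the toggled edge, does not change.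

The fixed points are the `h`-increasing trees. A subgraph of `G_h` has no active edge iff every
vertex has at most one neighbour of smaller `h̄`. Such a graph has at most `n` edges (an edge is
determined by its upper endpoint, which is never `i_0`), so a connected one is a tree, and `h̄`
increases along every path leaving `i_0`, since a path that has started to climb can never turn
down.
-/

section Centroid
variable {n : ℕ} {h : Fin n → ℤ}

lemma fract_cent (i : Fin (n + 1)) : Int.fract (cent n h i) = (i : ℝ) / (n + 1) := by
  rw [cent, Int.fract_intCast_add, Int.fract_eq_self]
  constructor
  · positivity
  · rw [div_lt_one (by positivity)]
    exact_mod_cast i.isLt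

lemma cent_injective : Function.Injective (cent n h) := fun i j hij => by
  have hfract := congrArg Int.fract hij
  rw [fract_cent, fract_cent, div_left_inj' (by positivity)] at hfract
  exact Fin.ext (by exact_mod_cast hfract)

lemma keyC_swap (a b : Fin (n + 1)) : keyC n h (a, b) = keyC n h (b, a) := by
  simp only [keyC, min_comm, max_comm]

lemma keyC_congr {a b c d : Fin (n + 1)} (hs : s(a, b) = s(c, d)) :
    keyC n h (a, b) = keyC n h (c, d) := by
  obtain ⟨rfl, rfl⟩ | ⟨rfl, rfl⟩ := Sym2.eq_iff.1 hs
  exacts [rfl, keyC_swap _ _]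

lemma keyC_of_lt {a b : Fin (n + 1)} (hab : cent n h a < cent n h b) :
    keyC n h (a, b) = toLex (cent n h a, cent n h b) := by
  simp only [keyC, min_eq_left hab.le, max_eq_right hab.le]

lemma eq_of_keyC_eq {e f : Fin (n + 1) × Fin (n + 1)} (he : cent n h e.1 < cent n h e.2)
    (hf : cent n h f.1 < cent n h f.2) (hef : keyC n h e = keyC n h f) : e = f := by
  obtain ⟨a, b⟩ := e
  obtain ⟨c, d⟩ := f
  rw [keyC_of_lt he, keyC_of_lt hf, toLex_inj, Prod.mk.injEq] at hef
  dsimp only at hef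
  rw [cent_injective hef.1, cent_injective hef.2]

lemma lt_of_keyC_lt_keyC {u v x : Fin (n + 1)} (huv : cent n h u < cent n h v)
    (hk : keyC n h (u, v) < keyC n h (u, x)) : cent n h v < cent n h x := by
  rw [keyC_of_lt huv, keyC, Prod.Lex.toLex_lt_toLex] at hk
  rcases hk with hk | ⟨-, hk⟩
  · exact absurd hk (min_le_left _ _).not_gt
  · exact (lt_max_iff.1 hk).resolve_left huv.not_gt

end Centroid

lemma SimpleGraph.Reachable.of_forall_adj_reachable {V : Type*} {G H : SimpleGraph V}
    (hGH : ∀ ⦃a b⦄, G.Adj a b → H.Reachable a b) {u v : V} (huv : G.Reachable u v) :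
    H.Reachable u v := by
  obtain ⟨p⟩ := huv
  induction p with
  | nil => rfl
  | cons hadj _ ih => exact (hGH hadj).trans ih

lemma SimpleGraph.Reachable.of_sym2_eq {V : Type*} {G : SimpleGraph V} {a b c d : V}
    (hab : G.Reachable a b) (hs : s(c, d) = s(a, b)) : G.Reachable c d := by
  obtain ⟨rfl, rfl⟩ | ⟨rfl, rfl⟩ := Sym2.eq_iff.1 hs
  exacts [hab, hab.symm]

section Toggle
variable {n : ℕ} {G : SimpleGraph (Fin (n + 1))} {e : Fin (n + 1) × Fin (n + 1)}

lemma edgeSet_toggleC (he : e.1 ≠ e.2) :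
    (toggleC G e).edgeSet = symmDiff G.edgeSet {s(e.1, e.2)} := by
  ext f
  unfold toggleC
  split_ifs with hadj <;> rcases eq_or_ne f s(e.1, e.2) with rfl | hf <;>
    simp [Set.mem_symmDiff, *]

lemma toggleC_adj_of_ne (he : e.1 ≠ e.2) {a b : Fin (n + 1)} (hab : s(a, b) ≠ s(e.1, e.2)) :
    (toggleC G e).Adj a b ↔ G.Adj a b := by
  rw [← SimpleGraph.mem_edgeSet, edgeSet_toggleC he, Set.mem_symmDiff, Set.mem_singleton_iff]
  simp [hab]

lemma toggleC_toggleC (he : e.1 ≠ e.2) : toggleC (toggleC G e) e = G := by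
  rw [← SimpleGraph.edgeSet_inj, edgeSet_toggleC he, edgeSet_toggleC he,
    symmDiff_symmDiff_cancel_right]

lemma toggleC_ne (he : e.1 ≠ e.2) : toggleC G e ≠ G := by
  rw [ne_eq, ← SimpleGraph.edgeSet_inj, edgeSet_toggleC he, symmDiff_eq_left]
  exact Set.singleton_ne_empty _

lemma toggleC_le {H : SimpleGraph (Fin (n + 1))} (hG : G ≤ H) (he : H.Adj e.1 e.2) :
    toggleC G e ≤ H := by
  rw [← SimpleGraph.edgeSet_subset_edgeSet, edgeSet_toggleC he.ne]
  exact symmDiff_le_sup.trans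
    (sup_le (SimpleGraph.edgeSet_mono hG) (Set.singleton_subset_iff.2 he))

lemma neg_one_pow_ncard_toggleC (he : e.1 ≠ e.2) :
    (-1 : ℤ) ^ (toggleC G e).edgeSet.ncard = -(-1) ^ G.edgeSet.ncard := by
  rw [edgeSet_toggleC he]
  by_cases hadj : s(e.1, e.2) ∈ G.edgeSet
  · rw [symmDiff_of_ge (Set.singleton_subset_iff.2 hadj),
      ← Set.ncard_sdiff_singleton_add_one hadj, pow_succ, mul_neg_one, neg_neg]
  · rw [(Set.disjoint_singleton_right.2 hadj).symmDiff_eq_sup]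
    change (-1 : ℤ) ^ (G.edgeSet ∪ {s(e.1, e.2)}).ncard = _
    rw [Set.union_singleton, Set.ncard_insert_of_notMem hadj, pow_succ, mul_neg_one]

lemma toggleC_connected (hG : G.Connected) (he : e.1 ≠ e.2)
    (hreach : (toggleC G e).Reachable e.1 e.2) : (toggleC G e).Connected := by
  refine ⟨fun u v => (hG.preconnected u v).of_forall_adj_reachable fun a b hab => ?_⟩
  by_cases hs : s(a, b) = s(e.1, e.2)
  · exact hreach.of_sym2_eq hs
  · exact ((toggleC_adj_of_ne he hs).2 hab).reachable

end Toggle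

section Involution
variable {n : ℕ} {h : Fin n → ℤ} {G : SimpleGraph (Fin (n + 1))}
  {e f : Fin (n + 1) × Fin (n + 1)}

lemma mem_activeC : e ∈ activeC n h G ↔ IsActiveC n h G e := by
  simp [activeC]

lemma IsActiveC.fst_ne_snd (he : IsActiveC n h G e) : e.1 ≠ e.2 :=
  fun heq => he.1.ne (congrArg (cent n h) heq)

lemma aboveC_anti (hef : keyC n h e ≤ keyC n h f) : aboveC n h G f ≤ aboveC n h G e :=
  fun _ _ hab => ⟨hab.1, hef.trans_lt hab.2⟩

lemma aboveC_toggleC_of_le (he : e.1 ≠ e.2) (hef : keyC n h e ≤ keyC n h f) :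
    aboveC n h (toggleC G e) f = aboveC n h G f := by
  ext
  exact and_congr_left fun hk =>
    toggleC_adj_of_ne he fun hs => (hef.trans_lt hk).ne' (keyC_congr hs)

lemma aboveC_le_toggleC (he : e.1 ≠ e.2) : aboveC n h G e ≤ toggleC G e :=
  fun _ _ hab => (toggleC_adj_of_ne he fun hs => hab.2.ne' (keyC_congr hs)).2 hab.1

lemma activeC_toggleC (he : e ∈ activeC n h G)
    (hmin : ∀ f ∈ activeC n h G, keyC n h e ≤ keyC n h f) :
    activeC n h (toggleC G e) = activeC n h G := by
  have he' := mem_activeC.1 he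
  ext f
  rw [mem_activeC, mem_activeC]
  rcases le_or_gt (keyC n h e) (keyC n h f) with hef | hfe
  · simp only [IsActiveC, aboveC_toggleC_of_le he'.fst_ne_snd hef]
  refine iff_of_false (fun hf => ?_) (fun hf => (hmin f (mem_activeC.2 hf)).not_gt hfe)
  -- an edge of the toggled graph above `f` is an edge of `G`, or it is `e`, whose endpoints
  -- are joined above `e`
  have hreach : (aboveC n h G f).Reachable f.1 f.2 := by
    refine hf.2.2.of_forall_adj_reachable fun a b hab => ?_
    obtain ⟨hab, hk⟩ := hab
    by_cases hs : s(a, b) = s(e.1, e.2)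
    · exact (he'.2.2.mono (aboveC_anti hfe.le)).of_sym2_eq hs
    · exact SimpleGraph.Adj.reachable ⟨(toggleC_adj_of_ne he'.fst_ne_snd hs).1 hab, hk⟩
  exact (hmin f (mem_activeC.2 ⟨hf.1, hf.2.1, hreach⟩)).not_gt hfe

lemma PsiH_eq_toggleC (he : e ∈ activeC n h G)
    (hmin : ∀ f ∈ activeC n h G, keyC n h e ≤ keyC n h f) : PsiH n h G = toggleC G e := by
  have hne : (activeC n h G).Nonempty := ⟨e, he⟩
  obtain ⟨he', hmin'⟩ := (Finset.exists_min_image _ (keyC n h) hne).choose_spec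
  rw [PsiH, dif_pos hne, eq_of_keyC_eq (mem_activeC.1 he').1 (mem_activeC.1 he).1
    (le_antisymm (hmin' e he) (hmin _ he'))]

lemma PsiH_of_activeC_eq_empty (hem : activeC n h G = ∅) : PsiH n h G = G :=
  dif_neg (Finset.not_nonempty_iff_eq_empty.2 hem)

lemma exists_PsiH_eq_toggleC (hne : (activeC n h G).Nonempty) :
    ∃ e, IsActiveC n h G e ∧ PsiH n h G = toggleC G e := by
  obtain ⟨e, he, hmin⟩ := (activeC n h G).exists_min_image (keyC n h) hne
  exact ⟨e, mem_activeC.1 he, PsiH_eq_toggleC he hmin⟩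

lemma activeC_PsiH : activeC n h (PsiH n h G) = activeC n h G := by
  rcases (activeC n h G).eq_empty_or_nonempty with hem | hne
  · rw [PsiH_of_activeC_eq_empty hem]
  · obtain ⟨e, he, hmin⟩ := (activeC n h G).exists_min_image (keyC n h) hne
    rw [PsiH_eq_toggleC he hmin, activeC_toggleC he hmin]

lemma PsiH_PsiH : PsiH n h (PsiH n h G) = G := by
  rcases (activeC n h G).eq_empty_or_nonempty with hem | hne
  · rw [PsiH_of_activeC_eq_empty hem, PsiH_of_activeC_eq_empty hem]
  · obtain ⟨e, he, hmin⟩ := (activeC n h G).exists_min_image (keyC n h) hne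
    have hact := activeC_toggleC he hmin
    rw [PsiH_eq_toggleC he hmin, PsiH_eq_toggleC (hact ▸ he) (hact ▸ hmin),
      toggleC_toggleC (mem_activeC.1 he).fst_ne_snd]

lemma PsiH_le_Gh (hG : G ≤ Gh n h) : PsiH n h G ≤ Gh n h := by
  rcases (activeC n h G).eq_empty_or_nonempty with hem | hne
  · rwa [PsiH_of_activeC_eq_empty hem]
  · obtain ⟨e, he, hPsi⟩ := exists_PsiH_eq_toggleC hne
    exact hPsi ▸ toggleC_le hG he.2.1

lemma PsiH_connected (hG : G.Connected) : (PsiH n h G).Connected := by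
  rcases (activeC n h G).eq_empty_or_nonempty with hem | hne
  · rwa [PsiH_of_activeC_eq_empty hem]
  · obtain ⟨e, he, hPsi⟩ := exists_PsiH_eq_toggleC hne
    exact hPsi ▸ toggleC_connected hG he.fst_ne_snd
      (he.2.2.mono (aboveC_le_toggleC he.fst_ne_snd))

lemma PsiH_ne (hne : (activeC n h G).Nonempty) : PsiH n h G ≠ G := by
  obtain ⟨e, he, hPsi⟩ := exists_PsiH_eq_toggleC hne
  exact hPsi ▸ toggleC_ne he.fst_ne_snd

lemma neg_one_pow_ncard_PsiH (hne : (activeC n h G).Nonempty) :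
    (-1 : ℤ) ^ (PsiH n h G).edgeSet.ncard = -(-1) ^ G.edgeSet.ncard := by
  obtain ⟨e, he, hPsi⟩ := exists_PsiH_eq_toggleC hne
  rw [hPsi, neg_one_pow_ncard_toggleC he.fst_ne_snd]

lemma sum_neg_one_pow_ncard_filter_activeC_nonempty {s : Finset (SimpleGraph (Fin (n + 1)))}
    (hs : ∀ G ∈ s, PsiH n h G ∈ s) :
    ∑ G ∈ s with (activeC n h G).Nonempty, (-1 : ℤ) ^ G.edgeSet.ncard = 0 := by
  refine Finset.sum_involution (fun G _ => PsiH n h G) (fun G hG => ?_)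
    (fun G hG _ => PsiH_ne (Finset.mem_filter.1 hG).2) (fun G hG => ?_) (fun G _ => PsiH_PsiH)
  · rw [neg_one_pow_ncard_PsiH (Finset.mem_filter.1 hG).2, add_neg_cancel]
  · obtain ⟨hGs, hne⟩ := Finset.mem_filter.1 hG
    exact Finset.mem_filter.2 ⟨hs G hGs, activeC_PsiH.symm ▸ hne⟩

end Involution

section FixedPoints
variable {n : ℕ} {h : Fin n → ℤ} {G H : SimpleGraph (Fin (n + 1))}

lemma cent_idxMin_le (j : Fin (n + 1)) : cent n h (idxMin n h) ≤ cent n h j :=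
  (Finite.exists_min (cent n h)).choose_spec j

lemma aboveC_le (e : Fin (n + 1) × Fin (n + 1)) : aboveC n h G e ≤ G :=
  fun _ _ hab => hab.1

lemma cent_le_of_mem_support {a b : Fin (n + 1)} (p : G.Walk a b)
    (hp : p.support.IsChain (fun x y => cent n h x < cent n h y)) {x : Fin (n + 1)}
    (hx : x ∈ p.support) : cent n h x ≤ cent n h b := by
  induction p generalizing x with
  | nil =>
    rw [SimpleGraph.Walk.support_nil, List.mem_singleton] at hx
    rw [hx]
  | @cons c d _ hcd q ih =>
    rw [SimpleGraph.Walk.support_cons, List.isChain_cons] at hp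
    rw [SimpleGraph.Walk.support_cons, List.mem_cons] at hx
    rcases hx with rfl | hx
    · have hd : q.support.head? = some d := by rw [← q.cons_tail_support]; rfl
      exact (hp.1 d hd).le.trans (ih hp.2 q.start_mem_support)
    · exact ih hp.2 hx

def UniqueLowerNeighbor (n : ℕ) (h : Fin n → ℤ) (G : SimpleGraph (Fin (n + 1))) : Prop :=
  ∀ ⦃z x y⦄, G.Adj z x → G.Adj z y → cent n h x < cent n h z → cent n h y < cent n h z →
    x = y

lemma UniqueLowerNeighbor.anti (hU : UniqueLowerNeighbor n h G) (hHG : H ≤ G) :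
    UniqueLowerNeighbor n h H :=
  fun _ _ _ hzx hzy => hU (hHG hzx) (hHG hzy)

lemma UniqueLowerNeighbor.isChain_cons_support (hU : UniqueLowerNeighbor n h G)
    {y t : Fin (n + 1)} (q : G.Walk y t) (hq : q.IsPath) {z : Fin (n + 1)} (hzy : G.Adj z y)
    (hlt : cent n h z < cent n h y) (hz : z ∉ q.support) :
    (z :: q.support).IsChain (fun a b => cent n h a < cent n h b) := by
  induction q generalizing z with
  | nil => simpa using hlt
  | @cons y x t hyx q ih =>
    have hyq : y ∉ q.support := ((SimpleGraph.Walk.cons_isPath_iff _ _).1 hq).2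
    have hyx' : cent n h y < cent n h x := by
      refine (lt_or_gt_of_ne (cent_injective.ne hyx.ne)).resolve_right fun hxy => hz ?_
      rw [hU hzy.symm hyx hlt hxy, SimpleGraph.Walk.support_cons]
      exact List.mem_cons_of_mem _ q.start_mem_support
    rw [SimpleGraph.Walk.support_cons, List.isChain_cons_cons]
    exact ⟨hlt, ih hq.of_cons hyx hyx' hyq⟩

lemma UniqueLowerNeighbor.activeC_eq_empty (hU : UniqueLowerNeighbor n h G) :
    activeC n h G = ∅ := by
  refine Finset.eq_empty_of_forall_notMem fun ⟨u, v⟩ huv => ?_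
  obtain ⟨hlt, -, hreach⟩ := mem_activeC.1 huv
  obtain ⟨p, hp⟩ := hreach.exists_isPath
  cases p with
  | nil => exact lt_irrefl _ hlt
  | @cons _ x _ hux q =>
    have hvx := lt_of_keyC_lt_keyC hlt hux.2
    have hchain := (hU.anti (aboveC_le _)).isChain_cons_support q hp.of_cons hux (hlt.trans hvx)
      ((SimpleGraph.Walk.cons_isPath_iff _ _).1 hp).2
    rw [← SimpleGraph.Walk.support_cons hux q] at hchain
    exact (cent_le_of_mem_support _ hchain (by simp)).not_gt hvx

lemma uniqueLowerNeighbor_of_activeC_eq_empty (hG : G ≤ Gh n h) (hem : activeC n h G = ∅) :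
    UniqueLowerNeighbor n h G := by
  -- two lower neighbours `x`, `y` of `z` would make `xy` active, through the path `x z y`
  have hactive : ∀ ⦃z x y⦄, G.Adj z x → G.Adj z y → cent n h x < cent n h y →
      cent n h y < cent n h z → (x, y) ∈ activeC n h G := by
    intro z x y hzx hzy hxy hyz
    have hGh : (Gh n h).Adj x y := by
      refine ⟨fun heq => hxy.ne (congrArg _ heq), ?_⟩
      have hzx' := (hG hzx).2
      rw [abs_lt] at hzx' ⊢
      constructor <;> linarith
    have hxz : keyC n h (x, y) < keyC n h (x, z) := by
      rw [keyC_of_lt hxy, keyC_of_lt (hxy.trans hyz), Prod.Lex.toLex_lt_toLex]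
      exact Or.inr ⟨rfl, hyz⟩
    have hzy' : keyC n h (x, y) < keyC n h (z, y) := by
      rw [keyC_of_lt hxy, keyC_swap, keyC_of_lt hyz, Prod.Lex.toLex_lt_toLex]
      exact Or.inl hxy
    have hreach : (aboveC n h G (x, y)).Reachable x y :=
      (SimpleGraph.Adj.reachable (G := aboveC n h G (x, y)) ⟨hzx.symm, hxz⟩).trans
        (SimpleGraph.Adj.reachable ⟨hzy, hzy'⟩)
    exact mem_activeC.2 ⟨hxy, hGh, hreach⟩
  intro z x y hzx hzy hxz hyz
  by_contra hxy
  rcases lt_or_gt_of_ne (cent_injective.ne hxy) with hlt | hlt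
  · simpa [hem] using hactive hzx hzy hlt hyz
  · simpa [hem] using hactive hzy hzx hlt hxz

noncomputable def upperEndpoint (n : ℕ) (h : Fin n → ℤ) : Sym2 (Fin (n + 1)) → Fin (n + 1) :=
  Sym2.lift ⟨fun a b => if cent n h a < cent n h b then b else a, fun a b => by
    dsimp only
    split_ifs with hab hba hba
    · exact absurd hab hba.not_gt
    · rfl
    · rfl
    · exact cent_injective (le_antisymm (not_lt.1 hba) (not_lt.1 hab))⟩

lemma upperEndpoint_mk {a b : Fin (n + 1)} (hab : cent n h a < cent n h b) :
    upperEndpoint n h s(a, b) = b :=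
  if_pos hab

lemma exists_eq_mk_of_mem_edgeSet {f : Sym2 (Fin (n + 1))} (hf : f ∈ G.edgeSet) :
    ∃ a b, cent n h a < cent n h b ∧ G.Adj a b ∧ f = s(a, b) := by
  induction f using Sym2.ind with
  | _ a b =>
    rcases lt_or_gt_of_ne (cent_injective.ne (G.ne_of_adj hf)) with hab | hba
    · exact ⟨a, b, hab, hf, rfl⟩
    · exact ⟨b, a, hba, G.adj_symm hf, Sym2.eq_swap⟩

lemma UniqueLowerNeighbor.ncard_edgeSet_le (hU : UniqueLowerNeighbor n h G) :
    G.edgeSet.ncard ≤ n := by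
  calc G.edgeSet.ncard ≤ ({idxMin n h}ᶜ : Set (Fin (n + 1))).ncard := by
        refine Set.ncard_le_ncard_of_injOn (upperEndpoint n h) (fun f hf => ?_)
          (fun f hf f' hf' hff' => ?_)
        · obtain ⟨a, b, hab, -, rfl⟩ := exists_eq_mk_of_mem_edgeSet hf
          rw [upperEndpoint_mk hab]
          exact fun hb => ((cent_idxMin_le a).trans_lt hab).ne' (congrArg _ hb)
        · obtain ⟨a, b, hab, hadj, rfl⟩ := exists_eq_mk_of_mem_edgeSet hf
          obtain ⟨a', b', hab', hadj', rfl⟩ := exists_eq_mk_of_mem_edgeSet hf'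
          rw [upperEndpoint_mk hab, upperEndpoint_mk hab'] at hff'
          subst hff'
          rw [hU hadj.symm hadj'.symm hab hab']
    _ = n := by
      rw [Set.ncard_compl, Set.ncard_singleton, Nat.card_eq_fintype_card, Fintype.card_fin,
        Nat.add_sub_cancel]

lemma IsIncTree.uniqueLowerNeighbor (hT : IsIncTree n h G) : UniqueLowerNeighbor n h G := by
  -- the path from `idxMin` to a lower neighbour `y` of `z`, extended by `yz`, is the path to `z`
  have hroot : ∀ ⦃z y⦄ (hzy : G.Adj z y), cent n h y < cent n h z →
      ∃ p : G.Walk (idxMin n h) y, (p.concat hzy.symm).IsPath := by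
    intro z y hzy hyz
    obtain ⟨p, hp⟩ := (hT.1.connected.preconnected (idxMin n h) y).exists_isPath
    exact ⟨p, hp.concat
      (fun hz => (cent_le_of_mem_support p (hT.2.2 y p hp) hz).not_gt hyz) hzy.symm⟩
  intro z x y hzx hzy hxz hyz
  obtain ⟨p, hp⟩ := hroot hzx hxz
  obtain ⟨q, hq⟩ := hroot hzy hyz
  have hpq := (hT.1.isAcyclic.subsingleton_path _ _).elim ⟨_, hp⟩ ⟨_, hq⟩
  exact (SimpleGraph.Walk.concat_inj (congrArg Subtype.val hpq)).1

lemma UniqueLowerNeighbor.isChain_support (hU : UniqueLowerNeighbor n h G) {v : Fin (n + 1)}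
    (p : G.Walk (idxMin n h) v) (hp : p.IsPath) :
    p.support.IsChain (fun a b => cent n h a < cent n h b) := by
  cases p with
  | nil => simp
  | cons hadj q =>
    rw [SimpleGraph.Walk.support_cons]
    exact hU.isChain_cons_support q hp.of_cons hadj
      ((cent_idxMin_le _).lt_of_ne (cent_injective.ne hadj.ne))
      ((SimpleGraph.Walk.cons_isPath_iff _ _).1 hp).2

lemma IsIncTree.ncard_edgeSet (hT : IsIncTree n h G) : G.edgeSet.ncard = n := by
  have := (SimpleGraph.isTree_iff_connected_and_card.1 hT.1).2
  rw [Nat.card_coe_set_eq, Nat.card_eq_fintype_card, Fintype.card_fin] at this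
  omega

lemma isIncTree_iff : IsIncTree n h G ↔ G ≤ Gh n h ∧ G.Connected ∧ activeC n h G = ∅ := by
  refine ⟨fun hT => ⟨hT.2.1, hT.1.connected, hT.uniqueLowerNeighbor.activeC_eq_empty⟩,
    fun ⟨hG, hconn, hem⟩ => ?_⟩
  have hU := uniqueLowerNeighbor_of_activeC_eq_empty hG hem
  refine ⟨SimpleGraph.isTree_iff_connected_and_card.2 ⟨hconn, ?_⟩, hG,
    fun v p hp => hU.isChain_support p hp⟩
  have hlower := hconn.card_vert_le_card_edgeSet_add_one
  have hupper := hU.ncard_edgeSet_le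
  rw [Nat.card_coe_set_eq, Nat.card_eq_fintype_card, Fintype.card_fin] at hlower ⊢
  omega

end FixedPoints

/-- For fixed `h ∈ ℤ^n`, the alternating sum of `(-1)^{e(G)}` over connected spanning
subgraphs `G` of `G_h` equals `(-1)^n` times the number of `h`-increasing trees. -/
theorem sum_connected_subgraphs_Gh (n : ℕ) (h : Fin n → ℤ) :
    ∑ G ∈ Finset.univ.filter
        (fun G : SimpleGraph (Fin (n + 1)) => G ≤ Gh n h ∧ G.Connected),
      (-1 : ℤ) ^ (G.edgeSet.toFinite.toFinset.card)
    = (-1) ^ n *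
        (Finset.univ.filter (fun T : SimpleGraph (Fin (n + 1)) => IsIncTree n h T)).card := by
  simp_rw [← Set.ncard_eq_toFinset_card]
  rw [← Finset.sum_filter_add_sum_filter_not _ fun G => (activeC n h G).Nonempty,
    sum_neg_one_pow_ncard_filter_activeC_nonempty fun G hG => ?_, zero_add, Finset.filter_filter]
  · have hfix (G : SimpleGraph (Fin (n + 1))) :
        ((G ≤ Gh n h ∧ G.Connected) ∧ ¬(activeC n h G).Nonempty) ↔ IsIncTree n h G := by
      rw [isIncTree_iff, Finset.not_nonempty_iff_eq_empty, and_assoc]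
    rw [Finset.filter_congr fun G _ => hfix G,
      Finset.sum_congr rfl fun T hT => by rw [(Finset.mem_filter.1 hT).2.ncard_edgeSet],
      Finset.sum_const, nsmul_eq_mul, mul_comm]
  · obtain ⟨-, hG, hconn⟩ := Finset.mem_filter.1 hG
    exact Finset.mem_filter.2 ⟨Finset.mem_univ _, PsiH_le_Gh hG, PsiH_connected hconn⟩
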